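/- Let G be a digraph and {G_α}_{α∈Λ'} a directed family (under inclusion) of subdigraphs of G with union equal to G. Then for a digraph Brown functor H̄ with extension Ĥ by inverse limits over finite subdigraphs, the canonical map Θ : Ĥ(G) → lim_{α∈Λ'} Ĥ(G_α), x ↦ (i_α* x), induced by the inclusions i_α : G_α ↪ G, is an isomorphism of abelian groups. -/

import Mathlib

/-- A directed graph: a vertex type with a loopless edge relation. -/
structure DGraph where
  V : Type
  E : V → V → Prop
  loopless : ∀ v, ¬ E v v

/-- A digraph map: each edge is collapsed or preserved. -/
structure DMap (G H : DGraph) where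
  toFun : G.V → H.V
  map_edge : ∀ {x y}, G.E x y → toFun x = toFun y ∨ H.E (toFun x) (toFun y)

def DMap.id (G : DGraph) : DMap G G := ⟨fun x => x, fun e => Or.inr e⟩

def DMap.comp {G H K : DGraph} (g : DMap H K) (f : DMap G H) : DMap G K :=
  ⟨fun x => g.toFun (f.toFun x), fun e => by
    rcases f.map_edge e with h | h
    · exact Or.inl (congrArg g.toFun h)
    · exact g.map_edge h⟩

/-- The `n`-step line digraph with orientations given by `o`:
if `o i` then the edge between `i` and `i+1` goes `i → i+1`, else `i+1 → i`. -/
def lineD (n : ℕ) (o : ℕ → Bool) : DGraph where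
  V := Fin (n+1)
  E i j := ((j:ℕ) = (i:ℕ)+1 ∧ o (i:ℕ) = true) ∨ ((i:ℕ) = (j:ℕ)+1 ∧ o (j:ℕ) = false)
  loopless := by rintro v (⟨h,_⟩|⟨h,_⟩) <;> omega

/-- The box product of digraphs. -/
def boxProd (G H : DGraph) : DGraph where
  V := G.V × H.V
  E p q := (p.1 = q.1 ∧ H.E p.2 q.2) ∨ (G.E p.1 q.1 ∧ p.2 = q.2)
  loopless := by
    rintro ⟨a,b⟩ (⟨_,h⟩|⟨h,_⟩)
    · exact H.loopless _ h
    · exact G.loopless _ h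

/-- Homotopy of digraph maps via a line-digraph parametrized family. -/
def Homotopic {G H : DGraph} (f g : DMap G H) : Prop :=
  ∃ (n : ℕ) (o : ℕ → Bool) (F : DMap (boxProd G (lineD n o)) H),
    (∀ x, F.toFun (x, (0 : Fin (n+1))) = f.toFun x) ∧
    (∀ x, F.toFun (x, Fin.last n) = g.toFun x)

def DMap.const (G H : DGraph) (c : H.V) : DMap G H := ⟨fun _ => c, fun _ => Or.inl rfl⟩

/-- A digraph is contractible if its identity is homotopic to a constant map. -/
def Contractible (G : DGraph) : Prop :=
  ∃ c : G.V, Homotopic (DMap.id G) (DMap.const G G c)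

/-- Homotopy equivalence of digraphs. -/
def HomotopyEquivalence {G H : DGraph} (u : DMap G H) (v : DMap H G) : Prop :=
  Homotopic (v.comp u) (DMap.id G) ∧ Homotopic (u.comp v) (DMap.id H)

open CategoryTheory

/-- A subdigraph of a digraph, given by subsets of vertices and edges. -/
structure Subdigraph (Y : DGraph) where
  verts : Set Y.V
  edges : Y.V → Y.V → Prop
  edge_sub : ∀ {x y}, edges x y → Y.E x y
  edge_mem : ∀ {x y}, edges x y → x ∈ verts ∧ y ∈ verts

namespace Subdigraph
variable {Y : DGraph}

def le (A B : Subdigraph Y) : Prop :=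
  A.verts ⊆ B.verts ∧ ∀ {x y}, A.edges x y → B.edges x y

def union (A B : Subdigraph Y) : Subdigraph Y where
  verts := A.verts ∪ B.verts
  edges x y := A.edges x y ∨ B.edges x y
  edge_sub := by rintro x y (h|h) <;> [exact A.edge_sub h; exact B.edge_sub h]
  edge_mem := by
    rintro x y (h|h)
    · exact ⟨Or.inl (A.edge_mem h).1, Or.inl (A.edge_mem h).2⟩
    · exact ⟨Or.inr (B.edge_mem h).1, Or.inr (B.edge_mem h).2⟩

def inter (A B : Subdigraph Y) : Subdigraph Y where
  verts := A.verts ∩ B.verts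
  edges x y := A.edges x y ∧ B.edges x y
  edge_sub h := A.edge_sub h.1
  edge_mem h := ⟨⟨(A.edge_mem h.1).1, (B.edge_mem h.2).1⟩, (A.edge_mem h.1).2, (B.edge_mem h.2).2⟩

/-- The digraph determined by a subdigraph. -/
def toD (A : Subdigraph Y) : DGraph where
  V := {v // v ∈ A.verts}
  E x y := A.edges x.val y.val
  loopless v h := Y.loopless v.val (A.edge_sub h)

def inclDMap {A B : Subdigraph Y} (h : A.le B) : DMap A.toD B.toD :=
  ⟨fun v => ⟨v.val, h.1 v.prop⟩, fun e => Or.inr (h.2 e)⟩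

/-- Inclusion of a subdigraph into the ambient digraph. -/
def inclY (A : Subdigraph Y) : DMap A.toD Y :=
  ⟨fun v => v.val, fun e => Or.inr (A.edge_sub e)⟩

theorem le_union_left (A B : Subdigraph Y) : A.le (A.union B) :=
  ⟨fun _ h => Or.inl h, fun e => Or.inl e⟩
theorem le_union_right (A B : Subdigraph Y) : B.le (A.union B) :=
  ⟨fun _ h => Or.inr h, fun e => Or.inr e⟩
theorem inter_le_left (A B : Subdigraph Y) : (A.inter B).le A :=
  ⟨fun _ h => h.1, fun e => e.1⟩
theorem inter_le_right (A B : Subdigraph Y) : (A.inter B).le B :=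
  ⟨fun _ h => h.2, fun e => e.2⟩

theorem finiteV {A : Subdigraph Y} (h : A.verts.Finite) : Finite A.toD.V :=
  h.to_subtype

theorem inter_verts_finite {A B : Subdigraph Y} (hA : A.verts.Finite) :
    (A.inter B).verts.Finite := hA.subset Set.inter_subset_left

theorem union_verts_finite {A B : Subdigraph Y} (hA : A.verts.Finite)
    (hB : B.verts.Finite) : (A.union B).verts.Finite := hA.union hB
end Subdigraph

/-- Disjoint union (coproduct) of a family of digraphs. -/
def sigmaD {ι : Type} (G : ι → DGraph) : DGraph where
  V := Σ i, (G i).V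
  E a b := ∃ h : a.1 = b.1, (G b.1).E (cast (congrArg (fun i => (G i).V) h) a.2) b.2
  loopless := by rintro ⟨i, x⟩ ⟨h, e⟩; exact (G i).loopless x e

def sigmaIncl {ι : Type} (G : ι → DGraph) (i : ι) : DMap (G i) (sigmaD G) :=
  ⟨fun x => ⟨i, x⟩, fun e => Or.inr ⟨rfl, e⟩⟩

/-- Binary disjoint union of digraphs. -/
def sumD (G H : DGraph) : DGraph where
  V := Sum G.V H.V
  E a b :=
    match a, b with
    | Sum.inl x, Sum.inl y => G.E x y
    | Sum.inr x, Sum.inr y => H.E x y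
    | _, _ => False
  loopless := by
    rintro (x|x) h
    · exact G.loopless x h
    · exact H.loopless x h

/-- A digraph Brown functor: a contravariant, homotopy-invariant, abelian-group valued
functor on finite digraphs satisfying the triviality, additivity and Mayer–Vietoris axioms. -/
structure BrownFunctor where
  obj : ∀ (G : DGraph), Finite G.V → AddCommGrpCat
  map : ∀ {G H : DGraph} (hG : Finite G.V) (hH : Finite H.V),
    DMap G H → (obj H hH ⟶ obj G hG)
  map_id : ∀ (G : DGraph) (hG : Finite G.V), map hG hG (DMap.id G) = 𝟙 (obj G hG)
  map_comp : ∀ {G H K : DGraph} (hG : Finite G.V) (hH : Finite H.V) (hK : Finite K.V)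
    (f : DMap G H) (g : DMap H K), map hG hK (g.comp f) = (map hH hK g) ≫ (map hG hH f)
  map_homotopic : ∀ {G H : DGraph} (hG : Finite G.V) (hH : Finite H.V)
    (f g : DMap G H), Homotopic f g → map hG hH f = map hG hH g
  triviality : ∀ (G : DGraph) (hG : Finite G.V), Subsingleton G.V → Nonempty G.V →
    ∀ x : obj G hG, x = 0
  additivity : ∀ {ι : Type} [Finite ι] (Gf : ι → DGraph) (h : ∀ i, Finite (Gf i).V),
    Function.Bijective (fun (x : obj (sigmaD Gf) (by have := h; exact Finite.instSigma)) i =>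
      map (h i) _ (sigmaIncl Gf i) x)
  mayer_vietoris : ∀ (Y : DGraph) (A B : Subdigraph Y)
    (hA : A.verts.Finite) (hB : B.verts.Finite)
    (a : obj A.toD (Subdigraph.finiteV hA)) (b : obj B.toD (Subdigraph.finiteV hB)),
    map (Subdigraph.finiteV (Subdigraph.inter_verts_finite hA)) _
        (Subdigraph.inclDMap (Subdigraph.inter_le_left A B)) a =
    map (Subdigraph.finiteV (Subdigraph.inter_verts_finite hA)) _
        (Subdigraph.inclDMap (Subdigraph.inter_le_right A B)) b →
    ∃ c : obj (A.union B).toD (Subdigraph.finiteV (Subdigraph.union_verts_finite hA hB)),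
      map _ _ (Subdigraph.inclDMap (Subdigraph.le_union_left A B)) c = a ∧
      map _ _ (Subdigraph.inclDMap (Subdigraph.le_union_right A B)) c = b

theorem DMap.ext {G H : DGraph} {u v : DMap G H} (h : u.toFun = v.toFun) : u = v := by
  cases u; cases v; cases h; rfl

/-- The directed set of finite subdigraphs of a digraph. -/
def FinSub (G : DGraph) := {A : Subdigraph G // A.verts.Finite}

/-- The extension `Ĥ` of a Brown functor to arbitrary digraphs: the inverse limit over
all finite subdigraphs, realized as compatible families. -/
def hatObj (B : BrownFunctor) (G : DGraph) : Type :=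
  {x : ∀ A : FinSub G, B.obj A.val.toD (Subdigraph.finiteV A.prop) //
    ∀ (A A' : FinSub G) (h : A.val.le A'.val),
      B.map _ _ (Subdigraph.inclDMap h) (x A') = x A}

/-- The image of a subdigraph under a digraph map. -/
def imageSub {G H : DGraph} (f : DMap G H) (A : Subdigraph G) : Subdigraph H where
  verts := f.toFun '' A.verts
  edges h h' := h ≠ h' ∧ ∃ x y, A.edges x y ∧ f.toFun x = h ∧ f.toFun y = h'
  edge_sub := by
    rintro u v ⟨hne, x, y, e, rfl, rfl⟩
    rcases f.map_edge (A.edge_sub e) with h | h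
    · exact absurd h hne
    · exact h
  edge_mem := by
    rintro u v ⟨hne, x, y, e, rfl, rfl⟩
    exact ⟨⟨x, (A.edge_mem e).1, rfl⟩, ⟨y, (A.edge_mem e).2, rfl⟩⟩

/-- Restriction of a digraph map to a subdigraph, with values in the image subdigraph. -/
def restrictMap {G H : DGraph} (f : DMap G H) (A : Subdigraph G) :
    DMap A.toD (imageSub f A).toD where
  toFun v := ⟨f.toFun v.val, v.val, v.prop, rfl⟩
  map_edge := by
    rintro ⟨x, hx⟩ ⟨y, hy⟩ e
    by_cases h : f.toFun x = f.toFun y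
    · exact Or.inl (Subtype.ext h)
    · exact Or.inr ⟨h, x, y, e, rfl, rfl⟩

def imageFin {G H : DGraph} (f : DMap G H) (A : FinSub G) : FinSub H :=
  ⟨imageSub f A.val, A.prop.image _⟩

theorem imageFin_mono {G H : DGraph} (f : DMap G H) {A A' : FinSub G}
    (h : A.val.le A'.val) : (imageFin f A).val.le (imageFin f A').val := by
  constructor
  · exact Set.image_mono h.1
  · rintro x y ⟨hne, a, b, e, rfl, rfl⟩
    exact ⟨hne, a, b, h.2 e, rfl, rfl⟩

/-- The functorial action of the extension `Ĥ` on digraph maps. -/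
def hatMap (B : BrownFunctor) {G H : DGraph} (f : DMap G H) :
    hatObj B H → hatObj B G := fun y =>
  ⟨fun A => B.map _ _ (restrictMap f A.val) (y.val (imageFin f A)), by
    intro A A' h
    have hcomm : (DMap.comp (restrictMap f A'.val) (Subdigraph.inclDMap h)) =
        (DMap.comp (Subdigraph.inclDMap (imageFin_mono f h)) (restrictMap f A.val)) := by
      apply DMap.ext; funext v; rfl
    have h3 := y.prop (imageFin f A) (imageFin f A') (imageFin_mono f h)
    have h1 := congrArg (fun φ => φ (y.val (imageFin f A')))
      (B.map_comp (Subdigraph.finiteV A.prop) (Subdigraph.finiteV A'.prop)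
        (Subdigraph.finiteV (imageFin f A').prop)
        (Subdigraph.inclDMap h) (restrictMap f A'.val))
    have h2 := congrArg (fun φ => φ (y.val (imageFin f A')))
      (B.map_comp (Subdigraph.finiteV A.prop) (Subdigraph.finiteV (imageFin f A).prop)
        (Subdigraph.finiteV (imageFin f A').prop)
        (restrictMap f A.val) (Subdigraph.inclDMap (imageFin_mono f h)))
    beta_reduce
    rw [← h3]
    exact (h1.symm.trans (congrArg (fun d => ConcreteCategory.hom (B.map (Subdigraph.finiteV A.prop)
      (Subdigraph.finiteV (imageFin f A').prop) d) (y.val (imageFin f A'))) hcomm)).trans h2⟩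

theorem Subdigraph.le_refl' {G : DGraph} (A : Subdigraph G) : A.le A :=
  ⟨fun _ h => h, fun e => e⟩

theorem Subdigraph.le_trans' {G : DGraph} {A B C : Subdigraph G}
    (h1 : A.le B) (h2 : B.le C) : A.le C :=
  ⟨fun _ h => h2.1 (h1.1 h), fun e => h2.2 (h1.2 e)⟩

theorem BrownFunctor.map_map (B : BrownFunctor) {G H K : DGraph} (hG : Finite G.V)
    (hH : Finite H.V) (hK : Finite K.V) (f : DMap G H) (g : DMap H K) (w : B.obj K hK) :
    B.map hG hH f (B.map hH hK g w) = B.map hG hK (g.comp f) w := by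
  have := congrArg (fun φ => φ w) (B.map_comp hG hH hK f g)
  simpa using this.symm

theorem BrownFunctor.map_congr (B : BrownFunctor) {G H : DGraph} (hG : Finite G.V)
    (hH : Finite H.V) {f g : DMap G H} (h : f = g) (w : B.obj H hH) :
    B.map hG hH f w = B.map hG hH g w := by rw [h]

theorem BrownFunctor.map_arg (B : BrownFunctor) {G H : DGraph} (hG : Finite G.V)
    (hH : Finite H.V) (f : DMap G H) {w w' : B.obj H hH} (h : w = w') :
    B.map hG hH f w = B.map hG hH f w' := by rw [h]

/-- `B.obj` of a digraph with no vertices is trivial. -/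
theorem BrownFunctor.objSubsingleton (B : BrownFunctor) (K : DGraph) (hK : Finite K.V)
    (he : IsEmpty K.V) (a b : B.obj K hK) : a = b := by
  let Gf : Empty → DGraph := fun i => i.elim
  have hGf : ∀ i, Finite (Gf i).V := fun i => i.elim
  haveI hSe : IsEmpty (sigmaD Gf).V := ⟨fun s => s.1.elim⟩
  have hS : Finite (sigmaD Gf).V := Finite.of_subsingleton
  have hsub : ∀ u v : B.obj (sigmaD Gf) hS, u = v := by
    intro u v
    apply (B.additivity Gf hGf).injective
    funext i
    exact i.elim
  let u : DMap K (sigmaD Gf) := ⟨fun v => he.elim v, fun {x y} _ => he.elim x⟩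
  let v : DMap (sigmaD Gf) K := ⟨fun s => s.1.elim, fun {x y} _ => x.1.elim⟩
  have hvu : v.comp u = DMap.id K := DMap.ext (funext fun x => he.elim x)
  have h1 : B.map hK hK (v.comp u) = 𝟙 _ := by rw [hvu, B.map_id]
  have h2 := B.map_comp hK hS hK u v
  have ha := congrArg (fun φ => φ a) (h2.symm.trans h1)
  have hb := congrArg (fun φ => φ b) (h2.symm.trans h1)
  calc a = B.map hK hS u (B.map hS hK v a) := by simpa using ha.symm
    _ = B.map hK hS u (B.map hS hK v b) := by
        rw [hsub (B.map hS hK v a) (B.map hS hK v b)]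
    _ = b := by simpa using hb

/-- The subdigraph of `Gα.toD` corresponding to a subdigraph `A ≤ Gα` of `G`. -/
def pullS {G : DGraph} (Gα A : Subdigraph G) (h : A.le Gα) : Subdigraph Gα.toD where
  verts := {v | v.val ∈ A.verts}
  edges u v := A.edges u.val v.val
  edge_sub e := h.2 e
  edge_mem e := ⟨(A.edge_mem e).1, (A.edge_mem e).2⟩

def pullF {G : DGraph} (Gα : Subdigraph G) (A : FinSub G) (h : A.val.le Gα) :
    FinSub Gα.toD :=
  ⟨pullS Gα A.val h, A.prop.preimage Subtype.val_injective.injOn⟩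

def gMap {G : DGraph} (Gα : Subdigraph G) (A : FinSub G) (h : A.val.le Gα) :
    DMap A.val.toD (pullS Gα A.val h).toD :=
  ⟨fun v => ⟨⟨v.val, h.1 v.prop⟩, v.prop⟩, fun e => Or.inr e⟩

/-- Any `z : Ĥ(G)` is recovered on a finite subdigraph `A ≤ Gα` from its
restriction to `Gα`. -/
theorem keyRec {G : DGraph} (B : BrownFunctor) (Gα : Subdigraph G) (A : FinSub G)
    (h : A.val.le Gα) (z : hatObj B G) :
    z.val A = B.map (Subdigraph.finiteV A.prop) (Subdigraph.finiteV (pullF Gα A h).prop)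
      (gMap Gα A h) ((hatMap B Gα.inclY z).val (pullF Gα A h)) := by
  have hAI : A.val.le (imageFin Gα.inclY (pullF Gα A h)).val := by
    constructor
    · intro v hv
      exact (Set.mem_image _ _ _).mpr ⟨⟨v, h.1 hv⟩, hv, rfl⟩
    · intro x y e
      refine ⟨?_, ⟨x, h.1 (A.val.edge_mem e).1⟩, ⟨y, h.1 (A.val.edge_mem e).2⟩, e, rfl, rfl⟩
      intro heq
      subst heq
      exact G.loopless x (A.val.edge_sub e)
  have hcomp : (restrictMap Gα.inclY (pullS Gα A.val h)).comp (gMap Gα A h) =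
      Subdigraph.inclDMap hAI := DMap.ext (funext fun v => rfl)
  calc z.val A
      = B.map _ _ (Subdigraph.inclDMap hAI)
        (z.val (imageFin Gα.inclY (pullF Gα A h))) := (z.prop _ _ hAI).symm
    _ = B.map _ _ ((restrictMap Gα.inclY (pullS Gα A.val h)).comp (gMap Gα A h))
        (z.val (imageFin Gα.inclY (pullF Gα A h))) := B.map_congr _ _ hcomp.symm _
    _ = B.map _ _ (gMap Gα A h) (B.map _ _ (restrictMap Gα.inclY (pullS Gα A.val h))
        (z.val (imageFin Gα.inclY (pullF Gα A h)))) :=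
      (B.map_map _ _ _ _ _ _).symm
    _ = _ := rfl

section Surj

variable {G : DGraph} {ι : Type}

def eElt (B : BrownFunctor) (Gs : ι → Subdigraph G) (y : ∀ α, hatObj B (Gs α).toD)
    (α : ι) (A : FinSub G) (h : A.val.le (Gs α)) :
    B.obj A.val.toD (Subdigraph.finiteV A.prop) :=
  B.map (Subdigraph.finiteV A.prop) (Subdigraph.finiteV (pullF (Gs α) A h).prop)
    (gMap (Gs α) A h) ((y α).val (pullF (Gs α) A h))

theorem eStep (B : BrownFunctor) (Gs : ι → Subdigraph G) (y : ∀ α, hatObj B (Gs α).toD)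
    (α γ : ι) (hαγ : (Gs α).le (Gs γ))
    (hy : hatMap B (Subdigraph.inclDMap hαγ) (y γ) = y α)
    (A : FinSub G) (h : A.val.le (Gs α)) :
    eElt B Gs y α A h = eElt B Gs y γ A (Subdigraph.le_trans' h hαγ) := by
  set P := pullF (Gs α) A h with hP
  have hJP : (imageFin (Subdigraph.inclDMap hαγ) P).val.le
      (pullS (Gs γ) A.val (Subdigraph.le_trans' h hαγ)) := by
    constructor
    · rintro w ⟨v, hv, rfl⟩
      exact hv
    · rintro u w ⟨hne, a, b, e, rfl, rfl⟩
      exact e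
  have hyP := (y γ).prop (imageFin (Subdigraph.inclDMap hαγ) P)
    (pullF (Gs γ) A (Subdigraph.le_trans' h hαγ)) hJP
  have h0 : (hatMap B (Subdigraph.inclDMap hαγ) (y γ)).val P = (y α).val P := by rw [hy]
  have hcomp : (Subdigraph.inclDMap hJP).comp
      ((restrictMap (Subdigraph.inclDMap hαγ) P.val).comp (gMap (Gs α) A h)) =
      gMap (Gs γ) A (Subdigraph.le_trans' h hαγ) := DMap.ext (funext fun v => rfl)
  calc eElt B Gs y α A h
      = B.map _ _ (gMap (Gs α) A h)
          ((hatMap B (Subdigraph.inclDMap hαγ) (y γ)).val P) :=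
      B.map_arg _ _ (gMap (Gs α) A h) h0.symm
    _ = B.map _ _ (gMap (Gs α) A h)
          (B.map _ _ (restrictMap (Subdigraph.inclDMap hαγ) P.val)
            ((y γ).val (imageFin (Subdigraph.inclDMap hαγ) P))) := rfl
    _ = B.map _ _ ((restrictMap (Subdigraph.inclDMap hαγ) P.val).comp (gMap (Gs α) A h))
          ((y γ).val (imageFin (Subdigraph.inclDMap hαγ) P)) :=
      B.map_map _ _ _ _ _ _
    _ = B.map _ _ ((restrictMap (Subdigraph.inclDMap hαγ) P.val).comp (gMap (Gs α) A h))
          (B.map _ _ (Subdigraph.inclDMap hJP)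
            ((y γ).val (pullF (Gs γ) A (Subdigraph.le_trans' h hαγ)))) :=
      B.map_arg _ _ _ hyP.symm
    _ = B.map _ _ ((Subdigraph.inclDMap hJP).comp
          ((restrictMap (Subdigraph.inclDMap hαγ) P.val).comp (gMap (Gs α) A h)))
          ((y γ).val (pullF (Gs γ) A (Subdigraph.le_trans' h hαγ))) :=
      B.map_map _ _ _ _ _ _
    _ = eElt B Gs y γ A (Subdigraph.le_trans' h hαγ) := B.map_congr _ _ hcomp _

theorem eIndep (B : BrownFunctor) (Gs : ι → Subdigraph G)
    (hdir : ∀ α β, ∃ γ, (Gs α).le (Gs γ) ∧ (Gs β).le (Gs γ))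
    (y : ∀ α, hatObj B (Gs α).toD)
    (hy : ∀ α β (h : (Gs α).le (Gs β)), hatMap B (Subdigraph.inclDMap h) (y β) = y α)
    (α β : ι) (A : FinSub G) (hα : A.val.le (Gs α)) (hβ : A.val.le (Gs β)) :
    eElt B Gs y α A hα = eElt B Gs y β A hβ := by
  obtain ⟨γ, h1, h2⟩ := hdir α β
  rw [eStep B Gs y α γ h1 (hy α γ h1) A hα, eStep B Gs y β γ h2 (hy β γ h2) A hβ]

theorem eCompat (B : BrownFunctor) (Gs : ι → Subdigraph G)
    (y : ∀ α, hatObj B (Gs α).toD) (α : ι) (A A' : FinSub G)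
    (hAA' : A.val.le A'.val) (h' : A'.val.le (Gs α)) :
    B.map (Subdigraph.finiteV A.prop) (Subdigraph.finiteV A'.prop)
        (Subdigraph.inclDMap hAA') (eElt B Gs y α A' h') =
      eElt B Gs y α A (Subdigraph.le_trans' hAA' h') := by
  have hPP' : (pullS (Gs α) A.val (Subdigraph.le_trans' hAA' h')).le
      (pullS (Gs α) A'.val h') :=
    ⟨fun v hv => hAA'.1 hv, fun e => hAA'.2 e⟩
  have hyP := (y α).prop (pullF (Gs α) A (Subdigraph.le_trans' hAA' h'))
    (pullF (Gs α) A' h') hPP'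
  have hcomp : (gMap (Gs α) A' h').comp (Subdigraph.inclDMap hAA') =
      (Subdigraph.inclDMap hPP').comp (gMap (Gs α) A (Subdigraph.le_trans' hAA' h')) :=
    DMap.ext (funext fun v => rfl)
  calc B.map (Subdigraph.finiteV A.prop) (Subdigraph.finiteV A'.prop)
        (Subdigraph.inclDMap hAA') (eElt B Gs y α A' h')
      = B.map _ _ ((gMap (Gs α) A' h').comp (Subdigraph.inclDMap hAA'))
          ((y α).val (pullF (Gs α) A' h')) := B.map_map _ _ _ _ _ _
    _ = B.map _ _ ((Subdigraph.inclDMap hPP').comp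
          (gMap (Gs α) A (Subdigraph.le_trans' hAA' h')))
          ((y α).val (pullF (Gs α) A' h')) := B.map_congr _ _ hcomp _
    _ = B.map _ _ (gMap (Gs α) A (Subdigraph.le_trans' hAA' h'))
          (B.map _ _ (Subdigraph.inclDMap hPP') ((y α).val (pullF (Gs α) A' h'))) :=
      (B.map_map _ _ _ _ _ _).symm
    _ = eElt B Gs y α A (Subdigraph.le_trans' hAA' h') :=
      B.map_arg _ _ (gMap (Gs α) A (Subdigraph.le_trans' hAA' h')) hyP

theorem imLe (Gs : ι → Subdigraph G) (α : ι) (C : FinSub (Gs α).toD) :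
    (imageFin (Gs α).inclY C).val.le (Gs α) := by
  constructor
  · rintro v ⟨u, hu, rfl⟩
    exact u.prop
  · rintro x y ⟨hne, u, w, e, rfl, rfl⟩
    exact C.val.edge_sub e

theorem eTheta (B : BrownFunctor) (Gs : ι → Subdigraph G)
    (y : ∀ α, hatObj B (Gs α).toD) (α : ι) (C : FinSub (Gs α).toD)
    (hIm : (imageFin (Gs α).inclY C).val.le (Gs α)) :
    B.map (Subdigraph.finiteV C.prop)
        (Subdigraph.finiteV (imageFin (Gs α).inclY C).prop)
        (restrictMap (Gs α).inclY C.val)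
        (eElt B Gs y α (imageFin (Gs α).inclY C) hIm) = (y α).val C := by
  set A := imageFin (Gs α).inclY C with hA
  have hCP : C.val.le (pullS (Gs α) A.val hIm) := by
    constructor
    · intro v hv
      exact (Set.mem_image _ _ _).mpr ⟨v, hv, rfl⟩
    · intro u w e
      refine ⟨?_, u, w, e, rfl, rfl⟩
      intro heq
      have hE := (Gs α).edge_sub (C.val.edge_sub e)
      rw [heq] at hE
      exact G.loopless _ hE
  have hyC := (y α).prop C (pullF (Gs α) A hIm) hCP
  have hcomp : (gMap (Gs α) A hIm).comp (restrictMap (Gs α).inclY C.val) =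
      Subdigraph.inclDMap hCP := DMap.ext (funext fun v => rfl)
  calc B.map (Subdigraph.finiteV C.prop) (Subdigraph.finiteV A.prop)
        (restrictMap (Gs α).inclY C.val) (eElt B Gs y α A hIm)
      = B.map _ _ ((gMap (Gs α) A hIm).comp (restrictMap (Gs α).inclY C.val))
          ((y α).val (pullF (Gs α) A hIm)) := B.map_map _ _ _ _ _ _
    _ = B.map _ _ (Subdigraph.inclDMap hCP) ((y α).val (pullF (Gs α) A hIm)) :=
      B.map_congr _ _ hcomp _
    _ = (y α).val C := hyC

theorem cofinal [Nonempty ι] (Gs : ι → Subdigraph G)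
    (hdir : ∀ α β, ∃ γ, (Gs α).le (Gs γ) ∧ (Gs β).le (Gs γ))
    (hverts : ∀ v : G.V, ∃ α, v ∈ (Gs α).verts)
    (hedges : ∀ x y, G.E x y → ∃ α, (Gs α).edges x y)
    (A : FinSub G) : ∃ α, A.val.le (Gs α) := by
  classical
  have ub : ∀ s : Finset ι, ∃ γ, ∀ α ∈ s, (Gs α).le (Gs γ) := by
    intro s
    induction s using Finset.induction with
    | empty => exact ⟨Classical.arbitrary ι, fun α h => absurd h (Finset.notMem_empty α)⟩
    | @insert a s _ ih =>
      obtain ⟨γ₀, hγ₀⟩ := ih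
      obtain ⟨γ, h1, h2⟩ := hdir a γ₀
      refine ⟨γ, fun α hα => ?_⟩
      rcases Finset.mem_insert.mp hα with rfl | hα
      · exact h1
      · exact Subdigraph.le_trans' (hγ₀ α hα) h2
  set fv : G.V → ι := fun v => (hverts v).choose with hfv
  set fe : G.V × G.V → ι := fun p =>
    if h : G.E p.1 p.2 then (hedges p.1 p.2 h).choose else Classical.arbitrary ι with hfe
  have hSfin : {p : G.V × G.V | A.val.edges p.1 p.2}.Finite :=
    (A.prop.prod A.prop).subset
      (fun p hp => ⟨(A.val.edge_mem hp).1, (A.val.edge_mem hp).2⟩)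
  obtain ⟨γ, hγ⟩ := ub (A.prop.toFinset.image fv ∪ hSfin.toFinset.image fe)
  refine ⟨γ, ?_, ?_⟩
  · intro v hv
    have hmem : fv v ∈ A.prop.toFinset.image fv ∪ hSfin.toFinset.image fe :=
      Finset.mem_union_left _
        (Finset.mem_image.mpr ⟨v, A.prop.mem_toFinset.mpr hv, rfl⟩)
    exact (hγ _ hmem).1 (hverts v).choose_spec
  · intro x y e
    have hE : G.E x y := A.val.edge_sub e
    have hmem : fe (x, y) ∈ A.prop.toFinset.image fv ∪ hSfin.toFinset.image fe :=
      Finset.mem_union_right _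
        (Finset.mem_image.mpr ⟨(x, y), hSfin.mem_toFinset.mpr e, rfl⟩)
    have hval : fe (x, y) = (hedges x y hE).choose := by
      simp only [hfe]
      exact dif_pos hE
    have hed : (Gs (fe (x, y))).edges x y := by
      rw [hval]
      exact (hedges x y hE).choose_spec
    exact (hγ _ hmem).2 hed

end Surj

/-- Let `{G_α}` be a directed family of subdigraphs of `G` whose union is
`G`.  Then the canonical map `Θ : Ĥ(G) → lim_α Ĥ(G_α)` induced by the inclusions
`i_α : G_α ↪ G` is an isomorphism; equivalently, the map `x ↦ (i_α* x)_α` is injective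
and hits exactly the compatible families. -/
theorem hat_directed_limit (B : BrownFunctor) {G : DGraph} {ι : Type}
    (Gs : ι → Subdigraph G)
    (hdir : ∀ α β, ∃ γ, (Gs α).le (Gs γ) ∧ (Gs β).le (Gs γ))
    (hverts : ∀ v : G.V, ∃ α, v ∈ (Gs α).verts)
    (hedges : ∀ x y, G.E x y → ∃ α, (Gs α).edges x y) :
    Function.Injective
      (fun (x : hatObj B G) (α : ι) => hatMap B (Gs α).inclY x) ∧
    ∀ y : ∀ α, hatObj B (Gs α).toD,
      (∀ α β (h : (Gs α).le (Gs β)), hatMap B (Subdigraph.inclDMap h) (y β) = y α) →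
      ∃ x : hatObj B G, ∀ α, hatMap B (Gs α).inclY x = y α := by
  constructor
  · intro x x' hxx'
    rcases isEmpty_or_nonempty ι with hι | hι
    · have hVe : IsEmpty G.V := ⟨fun v => (hverts v).elim fun α _ => hι.false α⟩
      apply Subtype.ext
      funext A
      exact B.objSubsingleton A.val.toD _ ⟨fun v => hVe.false v.val⟩ _ _
    · apply Subtype.ext
      funext A
      obtain ⟨α, h⟩ := cofinal Gs hdir hverts hedges A
      have h5 : hatMap B (Gs α).inclY x = hatMap B (Gs α).inclY x' := congrFun hxx' α
      rw [keyRec B (Gs α) A h x, keyRec B (Gs α) A h x', h5]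
  · intro y hy
    rcases isEmpty_or_nonempty ι with hι | hι
    · refine ⟨⟨fun A => 0, ?_⟩, fun α => (hι.false α).elim⟩
      intro A A' h
      have hVe : IsEmpty G.V := ⟨fun v => (hverts v).elim fun α _ => hι.false α⟩
      exact B.objSubsingleton A.val.toD _ ⟨fun v => hVe.false v.val⟩ _ _
    · choose pick hpick using fun A => cofinal Gs hdir hverts hedges A
      refine ⟨⟨fun A => eElt B Gs y (pick A) A (hpick A), ?_⟩, ?_⟩
      · intro A A' h
        obtain ⟨γ, h1, h2⟩ := hdir (pick A) (pick A')
        have e1 : eElt B Gs y (pick A') A' (hpick A') =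
            eElt B Gs y γ A' (Subdigraph.le_trans' (hpick A') h2) :=
          eIndep B Gs hdir y hy (pick A') γ A' (hpick A') (Subdigraph.le_trans' (hpick A') h2)
        show B.map _ _ (Subdigraph.inclDMap h) (eElt B Gs y (pick A') A' (hpick A')) = _
        rw [e1, eCompat B Gs y γ A A' h (Subdigraph.le_trans' (hpick A') h2)]
        exact eIndep B Gs hdir y hy γ (pick A) A _ (hpick A)
      · intro α
        apply Subtype.ext
        funext C
        have hIm := imLe Gs α C
        show B.map _ _ (restrictMap (Gs α).inclY C.val)
            (eElt B Gs y (pick (imageFin (Gs α).inclY C)) (imageFin (Gs α).inclY C)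
              (hpick _)) = (y α).val C
        rw [eIndep B Gs hdir y hy (pick (imageFin (Gs α).inclY C)) α
          (imageFin (Gs α).inclY C) (hpick _) hIm]
        exact eTheta B Gs y α C hIm
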